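/- arXiv:2412.15766 — 2 statements merged into one kernel-verified Lean document; each statement's English description precedes it below -/
import Mathlib

section
/- For every c ∈ (1,2) there exists a constant C > 0 such that for all N ∈ ℕ and all ξ₁, ξ₂ ∈ [-1/2,1/2) with ξ₁ ≠ 0, we have |∑_{n=1}^{N} e^{2πi(ξ₂⌊n^c⌋ + ξ₁ n)}| ≤ C · |ξ₁|⁻¹ · (N^c |ξ₂| + 1). -/
/-!
Write the summand as `f n * g n` with `f n = e (ξ₂ ⌊n^c⌋)` and `g n = e (ξ₁ n)`. The partial sums
of `g` are geometric sums of the point `e ξ₁ ≠ 1` of the unit circle, hence bounded by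
`1 / (2 |ξ₁|)`. Since `n ↦ ⌊n^c⌋` is nondecreasing, the total variation of `f` up to `N` telescopes
to at most `2π |ξ₂| N^c`. Summation by parts combines the two bounds.
-/

/-- `e x = e^{2πix}` -/
noncomputable def e (x : ℝ) : ℂ := Complex.exp (2 * Real.pi * Complex.I * x)

open Finset Real

lemma e_eq_exp_I_mul (x : ℝ) : e x = Complex.exp (Complex.I * ↑(2 * π * x)) := by
  rw [e]; push_cast; ring_nf

lemma e_add (x y : ℝ) : e (x + y) = e x * e y := by
  rw [e, e, e, ← Complex.exp_add]; push_cast; ring_nf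

lemma e_mul_natCast (x : ℝ) (k : ℕ) : e (x * k) = e x ^ k := by
  rw [e, e, ← Complex.exp_nat_mul]; push_cast; ring_nf

lemma norm_e (x : ℝ) : ‖e x‖ = 1 := by
  rw [e_eq_exp_I_mul, mul_comm, Complex.norm_exp_ofReal_mul_I]

lemma norm_e_sub_one (x : ℝ) : ‖e x - 1‖ = 2 * |sin (π * x)| := by
  rw [e_eq_exp_I_mul, Complex.norm_exp_I_mul_ofReal_sub_one, Real.norm_eq_abs, abs_mul,
    abs_two]
  ring_nf

lemma norm_e_sub_e_le (x y : ℝ) : ‖e x - e y‖ ≤ 2 * π * |x - y| := by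
  have h : e x - e y = e y * (e (x - y) - 1) := by
    rw [mul_sub, ← e_add, mul_one, add_sub_cancel]
  rw [h, norm_mul, norm_e, one_mul, norm_e_sub_one]
  calc 2 * |sin (π * (x - y))| ≤ 2 * |π * (x - y)| :=
        mul_le_mul_of_nonneg_left abs_sin_le_abs zero_le_two
    _ = 2 * π * |x - y| := by rw [abs_mul, abs_of_pos pi_pos, mul_assoc]

-- Jordan's inequality `2/π · |t| ≤ |sin t|` for `|t| ≤ π/2`, at `t = πx`.
lemma four_mul_abs_le_norm_e_sub_one {x : ℝ} (hx : |x| ≤ 1 / 2) : 4 * |x| ≤ ‖e x - 1‖ := by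
  have hπx : |π * x| ≤ π / 2 := by
    rw [abs_mul, abs_of_pos pi_pos]; nlinarith [pi_pos]
  have hJordan := mul_abs_le_abs_sin hπx
  rw [abs_mul, abs_of_pos pi_pos, ← mul_assoc, div_mul_cancel₀ _ pi_ne_zero] at hJordan
  rw [norm_e_sub_one]
  linarith

lemma norm_geom_sum_le_of_norm_eq_one {K : Type*} [NormedDivisionRing K] {z : K}
    (hz : ‖z‖ = 1) (hz1 : z ≠ 1) (n : ℕ) : ‖∑ i ∈ range n, z ^ i‖ ≤ 2 / ‖z - 1‖ := by
  rw [geom_sum_eq hz1, norm_div]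
  gcongr
  calc ‖z ^ n - 1‖ ≤ ‖z ^ n‖ + ‖(1 : K)‖ := norm_sub_le _ _
    _ = 2 := by rw [norm_pow, hz, one_pow, norm_one]; norm_num

lemma norm_sum_range_e_mul_succ_le {ξ : ℝ} (hξ : |ξ| ≤ 1 / 2) (hξ0 : ξ ≠ 0) (n : ℕ) :
    ‖∑ i ∈ range n, e (ξ * (i + 1 : ℕ))‖ ≤ 1 / (2 * |ξ|) := by
  have hlower := four_mul_abs_le_norm_e_sub_one hξ
  have hpos : 0 < 4 * |ξ| := by positivity
  have he1 : e ξ ≠ 1 := fun h => by rw [h, sub_self, norm_zero] at hlower; linarith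
  simp only [e_mul_natCast, pow_succ, ← sum_mul, norm_mul, norm_e, mul_one]
  calc ‖∑ i ∈ range n, e ξ ^ i‖ ≤ 2 / ‖e ξ - 1‖ := norm_geom_sum_le_of_norm_eq_one (norm_e ξ) he1 n
    _ ≤ 2 / (4 * |ξ|) := by gcongr
    _ = 1 / (2 * |ξ|) := by field_simp; norm_num

lemma norm_sum_range_smul_le_of_norm_partial_sum_le {R E : Type*} [SeminormedRing R]
    [SeminormedAddCommGroup E] [Module R E] [IsBoundedSMul R E] (f : ℕ → R) (g : ℕ → E) {B : ℝ}
    (hg : ∀ n, ‖∑ i ∈ range n, g i‖ ≤ B) (n : ℕ) :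
    ‖∑ i ∈ range n, f i • g i‖ ≤ B * (‖f (n - 1)‖ + ∑ i ∈ range (n - 1), ‖f (i + 1) - f i‖) := by
  have hB : 0 ≤ B := (norm_nonneg _).trans (hg 0)
  rw [sum_range_by_parts, mul_add, mul_sum]
  calc _ ≤ ‖f (n - 1) • ∑ i ∈ range n, g i‖
        + ∑ i ∈ range (n - 1), ‖(f (i + 1) - f i) • ∑ j ∈ range (i + 1), g j‖ :=
        (norm_sub_le _ _).trans (by gcongr; exact norm_sum_le _ _)
    _ ≤ _ := by
      gcongr with i
      · exact (norm_smul_le _ _).trans (by rw [mul_comm]; gcongr; exact hg n)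
      · exact (norm_smul_le _ _).trans (by rw [mul_comm]; gcongr; exact hg _)

lemma sum_norm_e_mul_sub_le_of_monotone {φ : ℕ → ℝ} (hφ : Monotone φ) (ξ : ℝ) (n : ℕ) :
    ∑ i ∈ range n, ‖e (ξ * φ (i + 1)) - e (ξ * φ i)‖ ≤ 2 * π * |ξ| * (φ n - φ 0) := by
  calc ∑ i ∈ range n, ‖e (ξ * φ (i + 1)) - e (ξ * φ i)‖
      ≤ ∑ i ∈ range n, 2 * π * |ξ| * (φ (i + 1) - φ i) := by
        gcongr with i
        refine (norm_e_sub_e_le _ _).trans_eq ?_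
        rw [← mul_sub, abs_mul, abs_of_nonneg (sub_nonneg.2 (hφ i.le_succ))]
        ring
    _ = 2 * π * |ξ| * (φ n - φ 0) := by rw [← mul_sum, sum_range_sub]

lemma monotone_floor_rpow_natCast_succ {c : ℝ} (hc : 0 ≤ c) :
    Monotone fun i : ℕ => (⌊((i + 1 : ℕ) : ℝ) ^ c⌋ : ℝ) := by
  intro i j hij
  dsimp only
  gcongr

theorem stmt0_general (c : ℝ) (hc1 : 1 < c) :
    ∃ C > (0 : ℝ), ∀ (N : ℕ) (ξ₁ ξ₂ : ℝ),
      ξ₁ ∈ Set.Ico (-(1/2) : ℝ) (1/2) → ξ₂ ∈ Set.Ico (-(1/2) : ℝ) (1/2) → ξ₁ ≠ 0 →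
      ‖∑ n ∈ Finset.Icc 1 N,
          e (ξ₂ * (⌊(n : ℝ) ^ c⌋ : ℝ) + ξ₁ * n)‖ ≤
        C * |ξ₁|⁻¹ * ((N : ℝ) ^ c * |ξ₂| + 1) := by
  refine ⟨π, pi_pos, fun N ξ₁ ξ₂ hξ₁ _ hξ₁0 => ?_⟩
  set φ : ℕ → ℝ := fun i => ⌊((i + 1 : ℕ) : ℝ) ^ c⌋
  have hsum : ∑ n ∈ Icc 1 N, e (ξ₂ * (⌊(n : ℝ) ^ c⌋ : ℝ) + ξ₁ * n)
      = ∑ i ∈ range N, e (ξ₂ * φ i) • e (ξ₁ * (i + 1 : ℕ)) := by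
    rw [← Ico_add_one_right_eq_Icc, sum_Ico_eq_sum_range, Nat.add_sub_cancel]
    simp only [φ, e_add, smul_eq_mul, add_comm 1]
  have hvar : φ (N - 1) - φ 0 ≤ (N : ℝ) ^ c := by
    rcases N with _ | N
    · simpa using rpow_nonneg le_rfl c
    · have hφ0 : φ 0 = 1 := by simp [φ]
      have hφN : φ N ≤ ((N + 1 : ℕ) : ℝ) ^ c := Int.floor_le _
      simp only [Nat.add_sub_cancel]
      linarith
  have habel := norm_sum_range_smul_le_of_norm_partial_sum_le (fun i => e (ξ₂ * φ i)) _
    (norm_sum_range_e_mul_succ_le (abs_le.2 ⟨hξ₁.1, hξ₁.2.le⟩) hξ₁0) N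
  rw [norm_e] at habel
  have hξ₁pos : 0 < |ξ₁| := abs_pos.2 hξ₁0
  rw [hsum]
  calc _ ≤ 1 / (2 * |ξ₁|) * (1 + 2 * π * |ξ₂| * (φ (N - 1) - φ 0)) :=
        habel.trans (by
          gcongr
          exact sum_norm_e_mul_sub_le_of_monotone
            (monotone_floor_rpow_natCast_succ (by linarith)) ξ₂ _)
    _ ≤ 1 / (2 * |ξ₁|) * (1 + 2 * π * |ξ₂| * (N : ℝ) ^ c) := by gcongr
    _ ≤ π * |ξ₁|⁻¹ * ((N : ℝ) ^ c * |ξ₂| + 1) := by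
      field_simp
      nlinarith [pi_gt_three, show 0 ≤ (N : ℝ) ^ c * |ξ₂| by positivity]

theorem stmt0 (c : ℝ) (hc1 : 1 < c) (hc2 : c < 2) :
    ∃ C > (0 : ℝ), ∀ (N : ℕ) (ξ₁ ξ₂ : ℝ),
      ξ₁ ∈ Set.Ico (-(1/2) : ℝ) (1/2) → ξ₂ ∈ Set.Ico (-(1/2) : ℝ) (1/2) → ξ₁ ≠ 0 →
      ‖∑ n ∈ Finset.Icc 1 N,
          e (ξ₂ * (⌊(n : ℝ) ^ c⌋ : ℝ) + ξ₁ * n)‖ ≤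
        C * |ξ₁|⁻¹ * ((N : ℝ) ^ c * |ξ₂| + 1) :=
  stmt0_general c hc1
end

section
/- Let c ∈ (1,2), λ_x, λ_y > 0, and x < y integers. For the phase f(t) = λ_x(t−x)^c − λ_y(t−y)^c defined for t > y, we have f''(t) = c(c−1)(λ_x(t−x)^{c−2} − λ_y(t−y)^{c−2}), and by the Mean Value Theorem there exists ξ between λ_x^{1/(c−2)}(t−x) and λ_y^{1/(c−2)}(t−y) such that |f''(t)| = |c(c−1)(c−2)|·λ_x^{1/(c−2)}·ξ^{c−3}·|(y−x) − ε(x,y)(t−y)|, where ε(x,y) = (λ_y/λ_x)^{1/(c−2)} − 1 (assuming λ_y ≤ λ_x so ε(x,y) ≥ 0). -/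
open Set

lemma hasDerivAt_shift_rpow (a p s : ℝ) (h : a < s) :
    HasDerivAt (fun u : ℝ => (u - a) ^ p) (p * (s - a) ^ (p - 1)) s := by
  have h1 : HasDerivAt (fun u : ℝ => u - a) 1 s := (hasDerivAt_id s).sub_const a
  have h2 := h1.rpow_const (p := p) (Or.inl (sub_pos.mpr h).ne')
  simpa using h2

lemma mvt_rpow (p a b : ℝ) (ha : 0 < a) (hb : 0 < b) :
    ∃ ξ ∈ Set.uIcc a b, a ^ p - b ^ p = p * ξ ^ (p - 1) * (a - b) := by
  have key : ∀ u v : ℝ, 0 < u → u < v →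
      ∃ ξ ∈ Set.Ioo u v, v ^ p - u ^ p = p * ξ ^ (p - 1) * (v - u) := by
    intro u v hu huv
    have hcont : ContinuousOn (fun z : ℝ => z ^ p) (Set.Icc u v) := by
      apply ContinuousOn.rpow_const continuousOn_id
      intro z hz
      exact Or.inl (by nlinarith [hz.1] : (z : ℝ) ≠ 0)
    obtain ⟨ξ, hξ, hslope⟩ := exists_hasDerivAt_eq_slope (fun z : ℝ => z ^ p)
      (fun z : ℝ => p * z ^ (p - 1)) huv hcont
      (fun z hz => Real.hasDerivAt_rpow_const (Or.inl (ne_of_gt (hu.trans hz.1))))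
    refine ⟨ξ, hξ, ?_⟩
    rw [eq_div_iff (sub_ne_zero.mpr huv.ne')] at hslope
    linarith
  rcases lt_trichotomy a b with hab | rfl | hab
  · obtain ⟨ξ, hξ, heq⟩ := key a b ha hab
    refine ⟨ξ, ?_, by linarith⟩
    rw [Set.uIcc_of_le hab.le]; exact Set.Ioo_subset_Icc_self hξ
  · exact ⟨a, Set.left_mem_uIcc, by ring⟩
  · obtain ⟨ξ, hξ, heq⟩ := key b a hb hab
    refine ⟨ξ, ?_, by linarith⟩
    rw [Set.uIcc_of_ge hab.le]; exact Set.Ioo_subset_Icc_self hξ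

theorem stmt14 (c : ℝ) (hc1 : 1 < c) (hc2 : c < 2)
    (lx ly : ℝ) (hlx : 0 < lx) (hly : 0 < ly) (hlyx : ly ≤ lx)
    (x y : ℤ) (hxy : x < y) (t : ℝ) (ht : (y : ℝ) < t) :
    deriv (deriv (fun s : ℝ => lx * (s - (x : ℝ)) ^ c - ly * (s - (y : ℝ)) ^ c)) t =
      c * (c - 1) * (lx * (t - (x : ℝ)) ^ (c - 2) - ly * (t - (y : ℝ)) ^ (c - 2)) ∧
    ∃ ξ ∈ Set.uIcc (lx ^ (1 / (c - 2)) * (t - (x : ℝ))) (ly ^ (1 / (c - 2)) * (t - (y : ℝ))),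
      |deriv (deriv (fun s : ℝ => lx * (s - (x : ℝ)) ^ c - ly * (s - (y : ℝ)) ^ c)) t| =
        |c * (c - 1) * (c - 2)| * lx ^ (1 / (c - 2)) * ξ ^ (c - 3) *
          |((y : ℝ) - (x : ℝ)) - ((ly / lx) ^ (1 / (c - 2)) - 1) * (t - (y : ℝ))| := by
  have hyx : (x : ℝ) < (y : ℝ) := by exact_mod_cast hxy
  have htx : (x : ℝ) < t := hyx.trans ht
  -- first derivative on Ioi y
  have hd1 : ∀ s : ℝ, (y : ℝ) < s →
      HasDerivAt (fun s : ℝ => lx * (s - (x : ℝ)) ^ c - ly * (s - (y : ℝ)) ^ c)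
        (lx * (c * (s - (x : ℝ)) ^ (c - 1)) - ly * (c * (s - (y : ℝ)) ^ (c - 1))) s := by
    intro s hs
    exact ((hasDerivAt_shift_rpow x c s (hyx.trans hs)).const_mul lx).sub
      ((hasDerivAt_shift_rpow y c s hs).const_mul ly)
  have hEq : deriv (fun s : ℝ => lx * (s - (x : ℝ)) ^ c - ly * (s - (y : ℝ)) ^ c)
      =ᶠ[nhds t] fun s : ℝ =>
        lx * (c * (s - (x : ℝ)) ^ (c - 1)) - ly * (c * (s - (y : ℝ)) ^ (c - 1)) := by
    filter_upwards [Ioi_mem_nhds ht] with s hs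
    exact (hd1 s hs).deriv
  have hc31 : c - 1 - 1 = c - 2 := by ring
  have hd2 : HasDerivAt (fun s : ℝ =>
      lx * (c * (s - (x : ℝ)) ^ (c - 1)) - ly * (c * (s - (y : ℝ)) ^ (c - 1)))
      (lx * (c * ((c - 1) * (t - (x : ℝ)) ^ (c - 2))) -
        ly * (c * ((c - 1) * (t - (y : ℝ)) ^ (c - 2)))) t := by
    have h1 := ((hasDerivAt_shift_rpow x (c - 1) t htx).const_mul c).const_mul lx
    have h2 := ((hasDerivAt_shift_rpow y (c - 1) t ht).const_mul c).const_mul ly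
    rw [hc31] at h1 h2
    exact h1.sub h2
  have h2nd : deriv (deriv (fun s : ℝ => lx * (s - (x : ℝ)) ^ c - ly * (s - (y : ℝ)) ^ c)) t
      = c * (c - 1) * (lx * (t - (x : ℝ)) ^ (c - 2) - ly * (t - (y : ℝ)) ^ (c - 2)) := by
    rw [hEq.deriv_eq, hd2.deriv]; ring
  refine ⟨h2nd, ?_⟩
  -- setup
  set q : ℝ := 1 / (c - 2) with hq
  have hc2ne : c - 2 ≠ 0 := by linarith
  have htx0 : (0 : ℝ) < t - (x : ℝ) := sub_pos.mpr htx
  have hty0 : (0 : ℝ) < t - (y : ℝ) := sub_pos.mpr ht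
  have hlxq : (0 : ℝ) < lx ^ q := Real.rpow_pos_of_pos hlx q
  have hlyq : (0 : ℝ) < ly ^ q := Real.rpow_pos_of_pos hly q
  set A : ℝ := lx ^ q * (t - (x : ℝ)) with hA
  set B : ℝ := ly ^ q * (t - (y : ℝ)) with hB
  have hA0 : 0 < A := mul_pos hlxq htx0
  have hB0 : 0 < B := mul_pos hlyq hty0
  have hpowA : A ^ (c - 2) = lx * (t - (x : ℝ)) ^ (c - 2) := by
    rw [hA, Real.mul_rpow hlxq.le htx0.le, ← Real.rpow_mul hlx.le,
      hq, one_div_mul_cancel hc2ne, Real.rpow_one]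
  have hpowB : B ^ (c - 2) = ly * (t - (y : ℝ)) ^ (c - 2) := by
    rw [hB, Real.mul_rpow hlyq.le hty0.le, ← Real.rpow_mul hly.le,
      hq, one_div_mul_cancel hc2ne, Real.rpow_one]
  obtain ⟨ξ, hξmem, hξeq⟩ := mvt_rpow (c - 2) A B hA0 hB0
  have hc32 : c - 2 - 1 = c - 3 := by ring
  rw [hc32] at hξeq
  have hξ0 : 0 < ξ := by
    rcases Set.mem_uIcc.mp hξmem with ⟨h1, _⟩ | ⟨h1, _⟩ <;> linarith
  have hξpow : 0 < ξ ^ (c - 3) := Real.rpow_pos_of_pos hξ0 _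
  have hAB : A - B = lx ^ q * (((y : ℝ) - (x : ℝ)) - ((ly / lx) ^ q - 1) * (t - (y : ℝ))) := by
    have hdiv : (ly / lx) ^ q = ly ^ q / lx ^ q := Real.div_rpow hly.le hlx.le q
    rw [hA, hB, hdiv]
    field_simp
    ring
  refine ⟨ξ, hξmem, ?_⟩
  rw [h2nd, ← hpowA, ← hpowB, hξeq, hAB]
  rw [show c * (c - 1) * ((c - 2) * ξ ^ (c - 3) *
      (lx ^ q * (((y : ℝ) - (x : ℝ)) - ((ly / lx) ^ q - 1) * (t - (y : ℝ))))) =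
      (c * (c - 1) * (c - 2)) * ((ξ ^ (c - 3) * lx ^ q) *
      (((y : ℝ) - (x : ℝ)) - ((ly / lx) ^ q - 1) * (t - (y : ℝ)))) from by ring]
  rw [abs_mul, abs_mul, abs_mul, abs_mul, abs_mul, abs_of_pos hξpow, abs_of_pos hlxq]
  ring
end
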